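/- Let F : ℝ^n → ℝ^n be continuously differentiable, M : ℝ^n → Matrix (Fin n) (Fin n) ℝ continuously differentiable with M(x) symmetric positive definite for each x, and λ > 0. Suppose for all x ∈ ℝ^n the matrix M(x)·DF(x) + DF(x)ᵀ·M(x) + Σᵢ Fᵢ(x)·(∂M/∂xᵢ)(x) + 2λM(x) is negative semidefinite, where DF(x) is the Jacobian of F at x. Then for every solution pair (x, δ) : [0,∞) → ℝ^n × ℝ^n of the joint system ẋ(t) = F(x(t)), δ̇(t) = DF(x(t))δ(t), the function V(t) = δ(t)ᵀM(x(t))δ(t) satisfies V'(t) ≤ −2λV(t) for all t, and consequently δ(t)ᵀM(x(t))δ(t) ≤ e^{−2λt}·δ(0)ᵀM(x(0))δ(0) for all t ≥ 0. -/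

import Mathlib

open Matrix Set

/-- Partial derivative of a matrix-valued function `M` with respect to the `i`-th
coordinate of its argument, taken entrywise. -/
noncomputable def matPartial {m n : ℕ} (M : (Fin m → ℝ) → Matrix (Fin n) (Fin n) ℝ)
    (i : Fin m) (σ : Fin m → ℝ) : Matrix (Fin n) (Fin n) ℝ :=
  Matrix.of fun j k => fderiv ℝ (fun σ' => M σ' j k) σ (Pi.single i 1)

/-- Jacobian matrix of a vector field `F : ℝⁿ → ℝⁿ` at `x`. -/
noncomputable def jacobian {n : ℕ} (F : (Fin n → ℝ) → (Fin n → ℝ)) (x : Fin n → ℝ) :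
    Matrix (Fin n) (Fin n) ℝ :=
  Matrix.of fun i j => fderiv ℝ (fun y => F y i) x (Pi.single j 1)

/-!
Along a joint solution, the product rule and the chain rule `d/dt M(x(t)) = ∑ᵢ Fᵢ(x) ∂M/∂xᵢ(x)`
give `V' = δᵀ (M DF + DFᵀ M + ∑ᵢ Fᵢ ∂M/∂xᵢ) δ`, and the matrix inequality evaluated at `δ` turns
this into `V' ≤ -2λV`. Then `e^{2λt} V(t)` has nonpositive derivative, so it is antitone on
`[0, ∞)`, which is the exponential bound.
-/

theorem HasDerivWithinAt.dotProduct_mulVec {ι : Type*} [Fintype ι] {δ : ℝ → ι → ℝ}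
    {N : ℝ → Matrix ι ι ℝ} {δ' : ι → ℝ} {N' : Matrix ι ι ℝ} {s : Set ℝ} {t : ℝ}
    (hδ : HasDerivWithinAt δ δ' s t)
    (hN : ∀ j k, HasDerivWithinAt (fun τ => N τ j k) (N' j k) s t) :
    HasDerivWithinAt (fun τ => δ τ ⬝ᵥ (N τ *ᵥ δ τ))
      (δ' ⬝ᵥ (N t *ᵥ δ t) + δ t ⬝ᵥ (N' *ᵥ δ t) + δ t ⬝ᵥ (N t *ᵥ δ')) s t := by
  have hδi := hasDerivWithinAt_pi.mp hδ
  refine (HasDerivWithinAt.fun_sum fun j _ => (hδi j).fun_mul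
    (HasDerivWithinAt.fun_sum fun k _ => (hN j k).fun_mul (hδi k))).congr_deriv ?_
  simp only [dotProduct, mulVec, Finset.mul_sum, ← Finset.sum_add_distrib]
  exact Finset.sum_congr rfl fun j _ => Finset.sum_congr rfl fun k _ => by ring

section

variable {m n : ℕ}

theorem fderiv_entry_apply_eq_sum_matPartial (M : (Fin m → ℝ) → Matrix (Fin n) (Fin n) ℝ)
    (y v : Fin m → ℝ) (j k : Fin n) :
    fderiv ℝ (fun σ => M σ j k) y v = (∑ i, v i • matPartial M i y) j k := by
  conv_lhs => rw [pi_eq_sum_univ' v]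
  simp [matPartial, Matrix.sum_apply, map_sum]

theorem HasDerivWithinAt.matrix_entry_comp {M : (Fin m → ℝ) → Matrix (Fin n) (Fin n) ℝ}
    (hM : ∀ j k, Differentiable ℝ fun y => M y j k) {x : ℝ → Fin m → ℝ} {v : Fin m → ℝ}
    {s : Set ℝ} {t : ℝ} (hx : HasDerivWithinAt x v s t) (j k : Fin n) :
    HasDerivWithinAt (fun τ => M (x τ) j k) ((∑ i, v i • matPartial M i (x t)) j k) s t := by
  rw [← fderiv_entry_apply_eq_sum_matPartial]
  exact (hM j k (x t)).hasFDerivAt.comp_hasDerivWithinAt t hx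

theorem hasDerivWithinAt_dotProduct_mulVec_comp
    {M : (Fin m → ℝ) → Matrix (Fin n) (Fin n) ℝ} (hM : ∀ j k, Differentiable ℝ fun y => M y j k)
    {x : ℝ → Fin m → ℝ} {δ : ℝ → Fin n → ℝ} {v : Fin m → ℝ} {J : Matrix (Fin n) (Fin n) ℝ}
    {s : Set ℝ} {t : ℝ} (hx : HasDerivWithinAt x v s t)
    (hδ : HasDerivWithinAt δ (J *ᵥ δ t) s t) :
    HasDerivWithinAt (fun τ => δ τ ⬝ᵥ (M (x τ) *ᵥ δ τ))
      (δ t ⬝ᵥ ((M (x t) * J + Jᵀ * M (x t) + ∑ i, v i • matPartial M i (x t)) *ᵥ δ t)) s t := by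
  refine (hδ.dotProduct_mulVec (hx.matrix_entry_comp hM)).congr_deriv ?_
  simp only [add_mulVec, dotProduct_add, ← mulVec_mulVec]
  rw [dotProduct_mulVec _ Jᵀ, vecMul_transpose]
  ring

end

theorem dotProduct_mulVec_le_neg_mul_of_posSemidef {ι : Type*} [Fintype ι]
    {S P : Matrix ι ι ℝ} {c : ℝ} (h : (-(S + c • P)).PosSemidef) (v : ι → ℝ) :
    v ⬝ᵥ (S *ᵥ v) ≤ -c * (v ⬝ᵥ (P *ᵥ v)) := by
  have := h.dotProduct_mulVec_nonneg v
  simp only [star_trivial, neg_mulVec, add_mulVec, smul_mulVec, dotProduct_neg, dotProduct_add,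
    dotProduct_smul, smul_eq_mul] at this
  linarith

theorem le_exp_mul_of_hasDerivWithinAt_le {V V' : ℝ → ℝ} {a c : ℝ}
    (hV : ∀ t ∈ Ici a, HasDerivWithinAt V (V' t) (Ici a) t)
    (hle : ∀ t ∈ Ici a, V' t ≤ -c * V t) :
    ∀ t ∈ Ici a, V t ≤ Real.exp (-c * (t - a)) * V a := by
  have hW : ∀ t ∈ Ici a, HasDerivWithinAt (fun τ => Real.exp (c * τ) * V τ)
      (Real.exp (c * t) * (c * V t + V' t)) (Ici a) t := fun t ht =>
    (((hasDerivAt_id t).const_mul c).exp.hasDerivWithinAt.mul (hV t ht)).congr_deriv <| by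
      simp only [id_eq, mul_one]; ring
  have hW_nonpos : ∀ t ∈ Ici a, Real.exp (c * t) * (c * V t + V' t) ≤ 0 := fun t ht =>
    mul_nonpos_of_nonneg_of_nonpos (Real.exp_pos _).le (by linarith [hle t ht])
  have hW_anti : AntitoneOn (fun τ => Real.exp (c * τ) * V τ) (Ici a) :=
    antitoneOn_of_hasDerivWithinAt_nonpos (convex_Ici a)
      (fun t ht => (hW t ht).continuousWithinAt)
      (fun t ht => (hW t (interior_subset ht)).mono interior_subset)
      (fun t ht => hW_nonpos t (interior_subset ht))
  intro t ht
  have hWt : Real.exp (c * t) * V t ≤ Real.exp (c * a) * V a := hW_anti self_mem_Ici ht ht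
  rw [show -c * (t - a) = c * a - c * t by ring, Real.exp_sub, div_mul_eq_mul_div,
    le_div_iff₀ (Real.exp_pos _)]
  linarith

theorem contraction_metric_differential_decay_general {n : ℕ}
    (F : (Fin n → ℝ) → (Fin n → ℝ))
    (M : (Fin n → ℝ) → Matrix (Fin n) (Fin n) ℝ)
    (hMC1 : ∀ j k, ContDiff ℝ 1 fun x => M x j k)
    (lam : ℝ)
    (hLMI : ∀ x : Fin n → ℝ,
      (-(M x * jacobian F x + (jacobian F x)ᵀ * M x +
          (∑ i, F x i • matPartial M i x) + (2 * lam) • M x)).PosSemidef) :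
    ∀ (x δ : ℝ → (Fin n → ℝ)),
      (∀ t ∈ Ici (0 : ℝ), HasDerivWithinAt x (F (x t)) (Ici 0) t) →
      (∀ t ∈ Ici (0 : ℝ), HasDerivWithinAt δ (jacobian F (x t) *ᵥ δ t) (Ici 0) t) →
      (∀ t ∈ Ici (0 : ℝ),
        derivWithin (fun τ => δ τ ⬝ᵥ (M (x τ) *ᵥ δ τ)) (Ici 0) t ≤
          -(2 * lam) * (δ t ⬝ᵥ (M (x t) *ᵥ δ t))) ∧
      (∀ t ∈ Ici (0 : ℝ),
        δ t ⬝ᵥ (M (x t) *ᵥ δ t) ≤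
          Real.exp (-(2 * lam) * t) * (δ 0 ⬝ᵥ (M (x 0) *ᵥ δ 0))) := by
  intro x δ hx hδ
  have hM : ∀ j k, Differentiable ℝ fun y => M y j k :=
    fun j k => (hMC1 j k).differentiable one_ne_zero
  have hV := fun t ht => hasDerivWithinAt_dotProduct_mulVec_comp hM (hx t ht) (hδ t ht)
  have hle := fun t => dotProduct_mulVec_le_neg_mul_of_posSemidef (hLMI (x t)) (δ t)
  refine ⟨fun t ht => ?_, fun t ht => ?_⟩
  · rw [(hV t ht).derivWithin (uniqueDiffOn_Ici 0 t ht)]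
    exact hle t
  · simpa using le_exp_mul_of_hasDerivWithinAt_le hV (fun t _ => hle t) t ht

/-- **Contraction metric gives differential Lyapunov decrease.** If
`M(x)DF(x) + DF(x)ᵀM(x) + ∑ᵢ Fᵢ(x) ∂M/∂xᵢ(x) + 2λM(x) ⪯ 0` for all `x`, then along any
joint solution of `ẋ = F(x)`, `δ̇ = DF(x)δ`, the differential Lyapunov function
`V(t) = δ(t)ᵀM(x(t))δ(t)` satisfies `V' ≤ -2λV`, hence `V(t) ≤ e^{-2λt}V(0)`. -/
theorem contraction_metric_differential_decay {n : ℕ}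
    (F : (Fin n → ℝ) → (Fin n → ℝ)) (hF : ContDiff ℝ 1 F)
    (M : (Fin n → ℝ) → Matrix (Fin n) (Fin n) ℝ)
    (hMC1 : ∀ j k, ContDiff ℝ 1 fun x => M x j k)
    (hMpos : ∀ x, (M x).PosDef)
    (lam : ℝ) (hlam : 0 < lam)
    (hLMI : ∀ x : Fin n → ℝ,
      (-(M x * jacobian F x + (jacobian F x)ᵀ * M x +
          (∑ i, F x i • matPartial M i x) + (2 * lam) • M x)).PosSemidef) :
    ∀ (x δ : ℝ → (Fin n → ℝ)),
      (∀ t ∈ Ici (0 : ℝ), HasDerivWithinAt x (F (x t)) (Ici 0) t) →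
      (∀ t ∈ Ici (0 : ℝ), HasDerivWithinAt δ (jacobian F (x t) *ᵥ δ t) (Ici 0) t) →
      (∀ t ∈ Ici (0 : ℝ),
        derivWithin (fun τ => δ τ ⬝ᵥ (M (x τ) *ᵥ δ τ)) (Ici 0) t ≤
          -(2 * lam) * (δ t ⬝ᵥ (M (x t) *ᵥ δ t))) ∧
      (∀ t ∈ Ici (0 : ℝ),
        δ t ⬝ᵥ (M (x t) *ᵥ δ t) ≤
          Real.exp (-(2 * lam) * t) * (δ 0 ⬝ᵥ (M (x 0) *ᵥ δ 0))) :=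
  contraction_metric_differential_decay_general F M hMC1 lam hLMI
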